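/- Let f₁ > 0, let N ≥ 1 be an integer, let a > 0 and φ ∈ ℝ, and define the complex tone y(t) = Σ_{n=1}^{N} a·exp(i(n f₁ t + φ)), a mixture of N components with equal amplitudes, equal phases, and evenly spaced frequencies. Let U_λ denote the Shannon scalogram operator U_λ y = |P_λ y|², where P_λ is the band projection keeping frequencies n f₁ with λ < n f₁ ≤ 2λ. Then for every integer m > max(1, ⌈log₂ N⌉) and all positive scales λ₁, …, λ_m, the iterated Shannon scalogram (U_{λ_m} ∘ ⋯ ∘ U_{λ_1}) y is identically zero. In particular, the effective scattering depth of such an N-component Fourier series grows at most logarithmically with N. -/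

import Mathlib

open Complex

/-- Evaluation of the trigonometric polynomial of fundamental frequency `f₁` with
coefficients `c : ℤ → ℂ` (finitely many nonzero): `t ↦ Σ_n c(n)·exp(i n f₁ t)`. -/
noncomputable def trigEval (f₁ : ℝ) (c : ℤ → ℂ) : ℝ → ℂ :=
  fun t => ∑ᶠ n : ℤ, c n * Complex.exp ((n : ℂ) * (f₁ : ℂ) * (t : ℂ) * Complex.I)

/-- Coefficients of the Shannon band projection `P_l`: keep only the terms whose
frequency `n·f₁` lies in the octave band `(l, 2l]`. -/
noncomputable def bandProjCoeff (f₁ l : ℝ) (c : ℤ → ℂ) : ℤ → ℂ :=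
  fun n => if l < (n : ℝ) * f₁ ∧ (n : ℝ) * f₁ ≤ 2 * l then c n else 0

/-- Coefficients of the Shannon scalogram `U_l y = |P_l y|²` of the trigonometric
polynomial with coefficients `c`: the coefficient of the frequency `d·f₁` is
`Σ_n p(n)·conj(p(n−d))` with `p = bandProjCoeff f₁ l c`. -/
noncomputable def scalogramCoeff (f₁ l : ℝ) (c : ℤ → ℂ) : ℤ → ℂ :=
  fun d => ∑ᶠ n : ℤ,
    bandProjCoeff f₁ l c n * (starRingEnd ℂ) (bandProjCoeff f₁ l c (n - d))

/-- Coefficients of the iterated Shannon scalogram `(U_{λ_m} ∘ ⋯ ∘ U_{λ_1}) y`, where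
`lams = [λ₁, …, λ_m]` (the head is applied first). -/
noncomputable def scatteringIterCoeff (f₁ : ℝ) (lams : List ℝ) (c : ℤ → ℂ) : ℤ → ℂ :=
  lams.foldl (fun c l => scalogramCoeff f₁ l c) c

/-!
Every term of `|P_λ y|²` at a positive frequency `d` pairs two frequencies `n` and `n - d` of the
octave band `(λ, 2λ]`, so `n ≤ 2(n - d)`, and strictly so: `2d < n`. One Shannon scalogram therefore
at least halves the largest positive frequency of the spectrum, and the `N` components of the tone
leave no positive frequency after `max 1 ⌈log₂ N⌉` scalograms; the next band projection, whose band
lies in the positive frequencies, is then zero.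
-/

def PosSpectrumLT (c : ℤ → ℂ) (B : ℕ) : Prop :=
  ∀ n : ℤ, 0 < n → c n ≠ 0 → n < B

theorem PosSpectrumLT.mono {c : ℤ → ℂ} {B B' : ℕ} (hc : PosSpectrumLT c B) (hB : B ≤ B') :
    PosSpectrumLT c B' :=
  fun n hn hcn => (hc n hn hcn).trans_le (by exact_mod_cast hB)

theorem bandProjCoeff_ne_zero {f₁ l : ℝ} {c : ℤ → ℂ} {n : ℤ} (h : bandProjCoeff f₁ l c n ≠ 0) :
    (l < n * f₁ ∧ n * f₁ ≤ 2 * l) ∧ c n ≠ 0 :=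
  ite_ne_right_iff.mp h

theorem exists_coeff_ne_zero_of_scalogramCoeff_ne_zero {f₁ l : ℝ} (hf₁ : 0 < f₁) {c : ℤ → ℂ}
    {d : ℤ} (h : scalogramCoeff f₁ l c d ≠ 0) : ∃ n : ℤ, l < n * f₁ ∧ 2 * d < n ∧ c n ≠ 0 := by
  obtain ⟨n, hn⟩ : ∃ n, bandProjCoeff f₁ l c n * starRingEnd ℂ (bandProjCoeff f₁ l c (n - d)) ≠ 0 :=
    not_forall.mp fun hall => h (finsum_eq_zero_of_forall_eq_zero hall)
  obtain ⟨⟨hlow, hhigh⟩, hcn⟩ := bandProjCoeff_ne_zero (left_ne_zero_of_mul hn)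
  obtain ⟨⟨hlow', -⟩, -⟩ := bandProjCoeff_ne_zero (map_ne_zero _ |>.mp (right_ne_zero_of_mul hn))
  refine ⟨n, hlow, ?_, hcn⟩
  have : (2 * d : ℝ) * f₁ < n * f₁ := by push_cast at hlow'; linarith
  exact_mod_cast lt_of_mul_lt_mul_right this hf₁.le

theorem PosSpectrumLT.scalogramCoeff {f₁ : ℝ} (hf₁ : 0 < f₁) (l : ℝ) {c : ℤ → ℂ} {B : ℕ}
    (hc : PosSpectrumLT c B) : PosSpectrumLT (scalogramCoeff f₁ l c) (B / 2) := by
  intro d hd hcd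
  obtain ⟨n, -, hdn, hcn⟩ := exists_coeff_ne_zero_of_scalogramCoeff_ne_zero hf₁ hcd
  have := hc n (by omega) hcn
  omega

theorem scalogramCoeff_eq_zero_of_posSpectrumLT_one {f₁ l : ℝ} (hf₁ : 0 < f₁) (hl : 0 ≤ l)
    {c : ℤ → ℂ} (hc : PosSpectrumLT c 1) : scalogramCoeff f₁ l c = 0 := by
  funext d
  by_contra hcd
  obtain ⟨n, hln, -, hcn⟩ := exists_coeff_ne_zero_of_scalogramCoeff_ne_zero hf₁ hcd
  have hn : 0 < n := by exact_mod_cast pos_of_mul_pos_left (hl.trans_lt hln) hf₁.le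
  have := hc n hn hcn
  omega

theorem scatteringIterCoeff_cons (f₁ l : ℝ) (lams : List ℝ) (c : ℤ → ℂ) :
    scatteringIterCoeff f₁ (l :: lams) c = scatteringIterCoeff f₁ lams (scalogramCoeff f₁ l c) :=
  rfl

theorem scatteringIterCoeff_append_singleton (f₁ l : ℝ) (lams : List ℝ) (c : ℤ → ℂ) :
    scatteringIterCoeff f₁ (lams ++ [l]) c = scalogramCoeff f₁ l (scatteringIterCoeff f₁ lams c) :=
  List.foldl_concat _ _ _ _

theorem PosSpectrumLT.scatteringIterCoeff {f₁ : ℝ} (hf₁ : 0 < f₁) (lams : List ℝ) {c : ℤ → ℂ}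
    {B : ℕ} (hc : PosSpectrumLT c B) :
    PosSpectrumLT (scatteringIterCoeff f₁ lams c) (B / 2 ^ lams.length) := by
  induction lams generalizing c B with
  | nil => rwa [List.length_nil, pow_zero, Nat.div_one]
  | cons l lams ih =>
    rw [scatteringIterCoeff_cons, List.length_cons, pow_succ', ← Nat.div_div_eq_div_mul]
    exact ih (hc.scalogramCoeff hf₁ l)

theorem succ_div_two_pow_le_one {N j : ℕ} (hj : max 1 (Nat.clog 2 N) ≤ j) :
    (N + 1) / 2 ^ j ≤ 1 := by
  have hN : N ≤ 2 ^ j :=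
    (Nat.le_pow_clog one_lt_two N).trans (Nat.pow_le_pow_right two_pos (le_of_max_le_right hj))
  have h2 : 2 ≤ 2 ^ j := by
    simpa using Nat.pow_le_pow_right two_pos (le_of_max_le_left hj)
  exact Nat.le_of_lt_succ ((Nat.div_lt_iff_lt_mul (by positivity)).mpr (by omega))

theorem scattering_depth_log_num_components_general
    (f₁ : ℝ) (hf₁ : 0 < f₁) (N : ℕ) (a : ℝ) (φ : ℝ)
    (c : ℤ → ℂ)
    (hc : ∀ n : ℤ, c n = if 1 ≤ n ∧ n ≤ (N : ℤ)
                          then (a : ℂ) * Complex.exp ((φ : ℂ) * Complex.I) else 0)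
    (lams : List ℝ) (hlen : max 1 (Nat.clog 2 N) < lams.length)
    (hpos : ∀ l ∈ lams, 0 < l) :
    ∀ t : ℝ, trigEval f₁ (scatteringIterCoeff f₁ lams c) t = 0 := by
  have hspec : PosSpectrumLT c (N + 1) := by
    intro n _ hcn
    rw [hc n] at hcn
    have := (ite_ne_right_iff.mp hcn).1
    push_cast
    omega
  obtain rfl | ⟨lams, l, rfl⟩ := lams.eq_nil_or_concat'
  · simp at hlen
  have hzero : scatteringIterCoeff f₁ (lams ++ [l]) c = 0 := by
    rw [scatteringIterCoeff_append_singleton]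
    refine scalogramCoeff_eq_zero_of_posSpectrumLT_one hf₁ (hpos l (by simp)).le ?_
    refine (hspec.scatteringIterCoeff hf₁ lams).mono (succ_div_two_pow_le_one ?_)
    simpa [Nat.lt_succ_iff] using hlen
  intro t
  simp [trigEval, hzero]

/-- For the complex tone `y(t) = Σ_{n=1}^{N} a·exp(i(n f₁ t + φ))`
(`N ≥ 1` components of equal amplitudes `a > 0`, equal phases `φ`, evenly spaced
frequencies), every iterated Shannon scalogram of order `m > max(1, ⌈log₂ N⌉)` is
identically zero: the effective scattering depth grows at most logarithmically in `N`. -/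
theorem scattering_depth_log_num_components
    (f₁ : ℝ) (hf₁ : 0 < f₁) (N : ℕ) (hN : 1 ≤ N) (a : ℝ) (ha : 0 < a) (φ : ℝ)
    (c : ℤ → ℂ)
    (hc : ∀ n : ℤ, c n = if 1 ≤ n ∧ n ≤ (N : ℤ)
                          then (a : ℂ) * Complex.exp ((φ : ℂ) * Complex.I) else 0)
    (y : ℝ → ℂ)
    (hy : ∀ t : ℝ, y t = ∑ n ∈ Finset.Icc (1 : ℤ) (N : ℤ),
            (a : ℂ) * Complex.exp (((n : ℂ) * (f₁ : ℂ) * (t : ℂ) + (φ : ℂ)) * Complex.I))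
    (hyc : ∀ t : ℝ, y t = trigEval f₁ c t)
    (lams : List ℝ) (hlen : max 1 (Nat.clog 2 N) < lams.length)
    (hpos : ∀ l ∈ lams, 0 < l) :
    ∀ t : ℝ, trigEval f₁ (scatteringIterCoeff f₁ lams c) t = 0 :=
  scattering_depth_log_num_components_general f₁ hf₁ N a φ c hc lams hlen hpos
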